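/- arXiv:2007.06661 — 2 statements merged into one kernel-verified Lean document; each statement's English description precedes it below -/
import Mathlib

section
/- Strong Lagrangian duality for the finite-sample smoothed DRO inner problem: for loss values ℓ₁,…,ℓₙ ≥ 0, η ∈ ℝ, and distance matrix D with D_{ij} = ‖x_i - x_j‖ + ‖c_i - c_j‖, the value of max over h ∈ ℝⁿ of (1/n)Σᵢ hᵢ(ℓᵢ - η) subject to hᵢ ≥ 0, (1/n)Σᵢ hᵢ² ≤ 1, and hᵢ - hⱼ ≤ L·D_{ij} for all i,j, equals inf over B ∈ ℝ^{n×n} with B ≥ 0 of ((1/n)Σᵢ max(ℓᵢ - Σⱼ(B_{ij} - B_{ji}) - η, 0)²)^{1/2} + (L/n)Σ_{i,j} D_{ij} B_{ij}. -/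
open Finset


lemma aux_swap (n : ℕ) (h : Fin n → ℝ) (β : Fin n → Fin n → ℝ) :
    ∑ i, h i * (∑ j, (β i j - β j i)) = ∑ i, ∑ j, (h i - h j) * β i j := by
  have h1 : ∑ i, ∑ j, h i * β j i = ∑ i, ∑ j, h j * β i j := Finset.sum_comm
  simp only [Finset.mul_sum, mul_sub, sub_mul, Finset.sum_sub_distrib]
  rw [h1]

lemma aux_cs (n : ℕ) (hn : 0 < n) (a h : Fin n → ℝ) (hh : ∀ i, 0 ≤ h i)
    (hh2 : ∑ i, h i ^ 2 ≤ n) :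
    (1 / n) * ∑ i, h i * a i ≤ Real.sqrt ((1 / n) * ∑ i, (max (a i) 0) ^ 2) := by
  have hnR : (0:ℝ) < n := Nat.cast_pos.2 hn
  set S := ∑ i, (max (a i) 0)^2 with hS
  have hS0 : 0 ≤ S := Finset.sum_nonneg fun i _ => sq_nonneg _
  have h1 : ∑ i, h i * a i ≤ ∑ i, h i * max (a i) 0 :=
    Finset.sum_le_sum fun i _ => mul_le_mul_of_nonneg_left (le_max_left _ _) (hh i)
  have h2 : ∑ i, h i * max (a i) 0 ≤ Real.sqrt (∑ i, h i ^ 2) * Real.sqrt S :=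
    Real.sum_mul_le_sqrt_mul_sqrt _ _ _
  have h3 : Real.sqrt (∑ i, h i ^ 2) ≤ Real.sqrt n := Real.sqrt_le_sqrt hh2
  have h4 : ∑ i, h i * a i ≤ Real.sqrt n * Real.sqrt S :=
    h1.trans (h2.trans (mul_le_mul_of_nonneg_right h3 (Real.sqrt_nonneg _)))
  have h5 : Real.sqrt (n : ℝ) * Real.sqrt S = Real.sqrt ((n : ℝ) * S) :=
    (Real.sqrt_mul hnR.le S).symm
  have h6 : Real.sqrt ((1/(n:ℝ)) * S) = Real.sqrt ((n:ℝ) * S) / n := by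
    rw [show (1/(n:ℝ)) * S = ((n:ℝ)*S)/((n:ℝ)^2) by field_simp,
      Real.sqrt_div (by positivity), Real.sqrt_sq hnR.le]
  rw [h6]
  calc (1/(n:ℝ)) * ∑ i, h i * a i ≤ (1/(n:ℝ)) * (Real.sqrt n * Real.sqrt S) :=
        mul_le_mul_of_nonneg_left h4 (by positivity)
    _ = Real.sqrt ((n:ℝ)*S) / n := by rw [h5]; ring

lemma max_mul_self (x : ℝ) : max x 0 * x = (max x 0) ^ 2 := by
  rcases le_or_gt x 0 with hx | hx
  · rw [max_eq_right hx]; ring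
  · rw [max_eq_left hx.le]; ring

lemma aux_attain (n : ℕ) (hn : 0 < n) (a : Fin n → ℝ) :
    ∃ h : Fin n → ℝ, (∀ i, 0 ≤ h i) ∧ (∑ i, h i ^ 2 ≤ n) ∧
      Real.sqrt ((1 / n) * ∑ i, (max (a i) 0) ^ 2) ≤ (1 / n) * ∑ i, h i * a i := by
  have hnR : (0:ℝ) < n := Nat.cast_pos.2 hn
  set S := ∑ i, (max (a i) 0)^2 with hS
  have hS0 : 0 ≤ S := Finset.sum_nonneg fun i _ => sq_nonneg _
  rcases eq_or_lt_of_le hS0 with hS1 | hS1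
  · refine ⟨0, fun i => le_rfl, by simpa using hnR.le, ?_⟩
    simp [← hS1]
  · set m := Real.sqrt S with hm
    have hm0 : 0 < m := Real.sqrt_pos.2 hS1
    have hmsq : m ^ 2 = S := Real.sq_sqrt hS0
    refine ⟨fun i => Real.sqrt n * max (a i) 0 / m, fun i => by positivity, ?_, ?_⟩
    · have : ∀ i, (Real.sqrt n * max (a i) 0 / m) ^ 2 = (n : ℝ) * (max (a i) 0)^2 / S := by
        intro i
        rw [div_pow, mul_pow, Real.sq_sqrt hnR.le, hmsq]
      rw [Finset.sum_congr rfl fun i _ => this i, ← Finset.sum_div, ← Finset.mul_sum, ← hS]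
      rw [mul_div_assoc, div_self hS1.ne']
      simp
    · have hsum : ∑ i, (Real.sqrt n * max (a i) 0 / m) * a i = Real.sqrt n * m := by
        have : ∀ i, (Real.sqrt n * max (a i) 0 / m) * a i
            = Real.sqrt n * ((max (a i) 0)^2) / m := by
          intro i
          rw [← max_mul_self]; ring
        rw [Finset.sum_congr rfl fun i _ => this i, ← Finset.sum_div, ← Finset.mul_sum, ← hS]
        rw [mul_div_assoc, hm, Real.div_sqrt]
      have key : Real.sqrt ((1/(n:ℝ)) * S) = (1/(n:ℝ)) * (Real.sqrt n * Real.sqrt S) := by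
        rw [show (1/(n:ℝ)) * S = ((n:ℝ) * S)/((n:ℝ)^2) by field_simp,
          Real.sqrt_div (by positivity), Real.sqrt_sq hnR.le, Real.sqrt_mul hnR.le]
        ring
      rw [hsum, key, hm]


section
variable (n : ℕ) (L : ℝ) (D : Fin n → Fin n → ℝ) (c : Fin n → ℝ)

def auxC : Set (Fin n → ℝ) := {h | (∀ i, 0 ≤ h i) ∧ ∑ i, h i ^ 2 ≤ n}

def auxS : Set ((Fin n → Fin n → ℝ) × ℝ) :=
  {p | ∃ h ∈ auxC n, (∀ i j, h i - h j - L * D i j ≤ p.1 i j) ∧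
    p.2 ≤ (1 / n) * ∑ i, h i * c i}

lemma auxC_convex : Convex ℝ (auxC n) := by
  intro x hx y hy a b ha hb hab
  refine ⟨fun i => ?_, ?_⟩
  · have := hx.1 i; have := hy.1 i
    simp only [Pi.add_apply, Pi.smul_apply, smul_eq_mul]
    nlinarith
  · have key : ∀ i : Fin n, ((a • x + b • y) i) ^ 2 ≤ a * x i ^ 2 + b * y i ^ 2 := by
      intro i
      simp only [Pi.add_apply, Pi.smul_apply, smul_eq_mul]
      nlinarith [sq_nonneg (x i - y i), mul_nonneg ha hb]
    calc ∑ i, ((a • x + b • y) i) ^ 2 ≤ ∑ i, (a * x i ^ 2 + b * y i ^ 2) :=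
          Finset.sum_le_sum fun i _ => key i
      _ = a * ∑ i, x i ^ 2 + b * ∑ i, y i ^ 2 := by
          rw [Finset.sum_add_distrib, Finset.mul_sum, Finset.mul_sum]
      _ ≤ a * n + b * n :=
          add_le_add (mul_le_mul_of_nonneg_left hx.2 ha) (mul_le_mul_of_nonneg_left hy.2 hb)
      _ = n := by rw [← add_mul, hab, one_mul]

lemma auxC_compact : IsCompact (auxC n) := by
  have hclosed : IsClosed (auxC n) := by
    have h1 : IsClosed {h : Fin n → ℝ | ∀ i, 0 ≤ h i} := by
      have : {h : Fin n → ℝ | ∀ i, 0 ≤ h i} = ⋂ i, {h | 0 ≤ h i} := by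
        ext h; simp
      rw [this]
      exact isClosed_iInter fun i => isClosed_le continuous_const (continuous_apply i)
    have h2 : IsClosed {h : Fin n → ℝ | ∑ i, h i ^ 2 ≤ (n : ℝ)} :=
      isClosed_le (by continuity) continuous_const
    exact h1.inter h2
  have hbdd : Bornology.IsBounded (auxC n) := by
    apply (Metric.isBounded_closedBall (x := (0 : Fin n → ℝ)) (r := Real.sqrt n)).subset
    intro h hh
    rw [Metric.mem_closedBall, dist_zero_right]
    rw [pi_norm_le_iff_of_nonneg (Real.sqrt_nonneg _)]
    intro i
    rw [Real.norm_eq_abs, ← Real.sqrt_sq_eq_abs]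
    apply Real.sqrt_le_sqrt
    calc h i ^ 2 ≤ ∑ j, h j ^ 2 :=
          Finset.single_le_sum (f := fun j => h j ^ 2) (fun j _ => sq_nonneg _) (mem_univ i)
      _ ≤ n := hh.2
  exact Metric.isCompact_of_isClosed_isBounded hclosed hbdd

lemma auxS_convex : Convex ℝ (auxS n L D c) := by
  rintro p ⟨h1, hh1, hg1, ho1⟩ q ⟨h2, hh2, hg2, ho2⟩ a b ha hb hab
  refine ⟨a • h1 + b • h2, auxC_convex n hh1 hh2 ha hb hab, ?_, ?_⟩
  · intro i j
    have e1 := mul_le_mul_of_nonneg_left (hg1 i j) ha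
    have e2 := mul_le_mul_of_nonneg_left (hg2 i j) hb
    simp only [Prod.fst_add, Prod.smul_fst, Pi.add_apply, Pi.smul_apply, smul_eq_mul]
    have e4 : a * (L * D i j) + b * (L * D i j) = L * D i j := by
      rw [← add_mul, hab, one_mul]
    linarith
  · have e3 : (1 / (n:ℝ)) * ∑ i, (a • h1 + b • h2) i * c i
        = a * ((1/n) * ∑ i, h1 i * c i) + b * ((1/n) * ∑ i, h2 i * c i) := by
      simp only [Pi.add_apply, Pi.smul_apply, smul_eq_mul, add_mul, Finset.sum_add_distrib]
      rw [show ∑ i, a * h1 i * c i = a * ∑ i, h1 i * c i by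
          rw [Finset.mul_sum]; exact Finset.sum_congr rfl fun i _ => by ring]
      rw [show ∑ i, b * h2 i * c i = b * ∑ i, h2 i * c i by
          rw [Finset.mul_sum]; exact Finset.sum_congr rfl fun i _ => by ring]
      ring
    rw [e3]
    simp only [Prod.snd_add, Prod.smul_snd, smul_eq_mul]
    exact add_le_add (mul_le_mul_of_nonneg_left ho1 ha) (mul_le_mul_of_nonneg_left ho2 hb)

lemma auxS_closed : IsClosed (auxS n L D c) := by
  apply IsSeqClosed.isClosed
  intro p q hp hq
  choose h hhC hG hobj using hp
  obtain ⟨h₀, hh₀C, φ, hφ, hconv⟩ := (auxC_compact n).tendsto_subseq hhC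
  have hpq : Filter.Tendsto (fun k => p (φ k)) Filter.atTop (nhds q) :=
    hq.comp hφ.tendsto_atTop
  have hev : ∀ i : Fin n, Filter.Tendsto (fun k => h (φ k) i) Filter.atTop (nhds (h₀ i)) :=
    fun i => ((continuous_apply i).tendsto h₀).comp hconv
  refine ⟨h₀, hh₀C, ?_, ?_⟩
  · intro i j
    have l1 : Filter.Tendsto (fun k => h (φ k) i - h (φ k) j - L * D i j) Filter.atTop
        (nhds (h₀ i - h₀ j - L * D i j)) :=
      ((hev i).sub (hev j)).sub tendsto_const_nhds
    have cont1 : Continuous (fun pr : (Fin n → Fin n → ℝ) × ℝ => pr.1 i j) :=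
      (continuous_apply j).comp ((continuous_apply i).comp continuous_fst)
    have r1 : Filter.Tendsto (fun k => (p (φ k)).1 i j) Filter.atTop (nhds (q.1 i j)) := by
      exact (cont1.tendsto q).comp hpq
    exact le_of_tendsto_of_tendsto' l1 r1 fun k => hG (φ k) i j
  · have l2 : Filter.Tendsto (fun k => (p (φ k)).2) Filter.atTop (nhds q.2) :=
      (continuous_snd.tendsto q).comp hpq
    have r2 : Filter.Tendsto (fun k => (1 / (n:ℝ)) * ∑ i, h (φ k) i * c i) Filter.atTop
        (nhds ((1 / n) * ∑ i, h₀ i * c i)) := by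
      apply Filter.Tendsto.const_mul
      apply tendsto_finset_sum
      intro i _
      exact (hev i).mul tendsto_const_nhds
    exact le_of_tendsto_of_tendsto' l2 r2 fun k => hobj (φ k)

end

lemma aux_weak (n : ℕ) (hn : 0 < n) (L : ℝ) (D : Fin n → Fin n → ℝ) (c : Fin n → ℝ)
    (h : Fin n → ℝ) (hh : ∀ i, 0 ≤ h i) (hh2 : ∑ i, h i ^ 2 ≤ n)
    (hlip : ∀ i j, h i - h j ≤ L * D i j)
    (B : Fin n → Fin n → ℝ) (hB : ∀ i j, 0 ≤ B i j) :
    (1 / n) * ∑ i, h i * c i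
      ≤ Real.sqrt ((1 / n) * ∑ i, (max (c i - ((∑ j, B i j) - (∑ j, B j i))) 0) ^ 2)
        + (L / n) * ∑ i, ∑ j, D i j * B i j := by
  have hnR : (0:ℝ) < n := Nat.cast_pos.2 hn
  set a : Fin n → ℝ := fun i => c i - ((∑ j, B i j) - (∑ j, B j i)) with ha
  have h1 := aux_cs n hn a h hh hh2
  have e1 : ∑ i, h i * c i = ∑ i, h i * a i + ∑ i, h i * (∑ j, (B i j - B j i)) := by
    rw [← Finset.sum_add_distrib]
    refine Finset.sum_congr rfl fun i _ => ?_
    rw [ha, Finset.sum_sub_distrib]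
    ring
  have h2 : ∑ i, h i * (∑ j, (B i j - B j i)) ≤ ∑ i, ∑ j, L * D i j * B i j := by
    rw [aux_swap]
    refine Finset.sum_le_sum fun i _ => Finset.sum_le_sum fun j _ => ?_
    exact mul_le_mul_of_nonneg_right (hlip i j) (hB i j)
  have e2 : (L / (n:ℝ)) * ∑ i, ∑ j, D i j * B i j = (1/n) * ∑ i, ∑ j, L * D i j * B i j := by
    rw [Finset.mul_sum, Finset.mul_sum]
    refine Finset.sum_congr rfl fun i _ => ?_
    rw [Finset.mul_sum, Finset.mul_sum]
    refine Finset.sum_congr rfl fun j _ => ?_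
    ring
  calc (1/(n:ℝ)) * ∑ i, h i * c i
      = (1/n) * ∑ i, h i * a i + (1/n) * ∑ i, h i * (∑ j, (B i j - B j i)) := by
        rw [e1]; ring
    _ ≤ Real.sqrt ((1/n) * ∑ i, (max (a i) 0) ^ 2) + (1/n) * ∑ i, ∑ j, L * D i j * B i j :=
        add_le_add h1 (mul_le_mul_of_nonneg_left h2 (by positivity))
    _ = _ := by rw [e2]


/-- Strong Lagrangian duality for the finite-sample smoothed DRO inner
problem. -/
theorem stmt_4 (n : ℕ) (hn : 0 < n) (ℓ : Fin n → ℝ) (hℓ : ∀ i, 0 ≤ ℓ i)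
    (η L : ℝ) (hL : 0 ≤ L)
    (D : Fin n → Fin n → ℝ)
    (hDnn : ∀ i j, 0 ≤ D i j) (hDsymm : ∀ i j, D i j = D j i)
    (hDtri : ∀ i j k, D i k ≤ D i j + D j k) :
    sSup {v : ℝ | ∃ h : Fin n → ℝ,
        (∀ i, 0 ≤ h i) ∧
        (1 / n) * ∑ i, (h i) ^ 2 ≤ 1 ∧
        (∀ i j, h i - h j ≤ L * D i j) ∧
        v = (1 / n) * ∑ i, h i * (ℓ i - η)}
    = sInf {v : ℝ | ∃ B : Fin n → Fin n → ℝ,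
        (∀ i j, 0 ≤ B i j) ∧
        v = Real.sqrt ((1 / n) * ∑ i,
              (max (ℓ i - ((∑ j, B i j) - (∑ j, B j i)) - η) 0) ^ 2)
            + (L / n) * ∑ i, ∑ j, D i j * B i j} := by
  have hnR : (0:ℝ) < n := Nat.cast_pos.2 hn
  set P : Set ℝ := {v : ℝ | ∃ h : Fin n → ℝ,
        (∀ i, 0 ≤ h i) ∧
        (1 / n) * ∑ i, (h i) ^ 2 ≤ 1 ∧
        (∀ i j, h i - h j ≤ L * D i j) ∧
        v = (1 / n) * ∑ i, h i * (ℓ i - η)} with hPdef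
  set Q : Set ℝ := {v : ℝ | ∃ B : Fin n → Fin n → ℝ,
        (∀ i j, 0 ≤ B i j) ∧
        v = Real.sqrt ((1 / n) * ∑ i,
              (max (ℓ i - ((∑ j, B i j) - (∑ j, B j i)) - η) 0) ^ 2)
            + (L / n) * ∑ i, ∑ j, D i j * B i j} with hQdef
  -- scaling helper
  have hscale : ∀ X : ℝ, (1/(n:ℝ)) * X ≤ 1 ↔ X ≤ n := by
    intro X
    rw [one_div, inv_mul_le_iff₀ hnR, mul_one]
  -- rewriting max-terms between the two sub-orderings
  have hrw : ∀ B : Fin n → Fin n → ℝ,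
      (∑ i, (max (ℓ i - ((∑ j, B i j) - (∑ j, B j i)) - η) 0) ^ 2 : ℝ)
        = ∑ i, (max ((ℓ i - η) - ((∑ j, B i j) - (∑ j, B j i))) 0) ^ 2 :=
    fun B => Finset.sum_congr rfl fun i _ => by rw [sub_right_comm]
  -- basic memberships
  have hP0 : (0:ℝ) ∈ P := by
    refine ⟨0, fun i => le_rfl, by simp [hnR.le], fun i j => ?_, by simp⟩
    simpa using mul_nonneg hL (hDnn i j)
  have hPne : P.Nonempty := ⟨0, hP0⟩
  have hQne : Q.Nonempty := ⟨_, ⟨fun _ _ => 0, fun i j => le_rfl, rfl⟩⟩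
  have hQlb : ∀ q ∈ Q, (0:ℝ) ≤ q := by
    rintro q ⟨B, hB, rfl⟩
    exact add_nonneg (Real.sqrt_nonneg _)
      (mul_nonneg (div_nonneg hL hnR.le)
        (Finset.sum_nonneg fun i _ => Finset.sum_nonneg fun j _ =>
          mul_nonneg (hDnn i j) (hB i j)))
  have hQbdd : BddBelow Q := ⟨0, fun q hq => hQlb q hq⟩
  -- weak duality
  have hweak : ∀ p ∈ P, ∀ q ∈ Q, p ≤ q := by
    rintro p ⟨h, hh, hh2, hlip, rfl⟩ q ⟨B, hB, rfl⟩
    rw [hrw B]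
    exact aux_weak n hn L D (fun i => ℓ i - η) h hh ((hscale _).1 hh2) hlip B hB
  obtain ⟨q₀, hq₀⟩ := hQne
  have hPbdd : BddAbove P := ⟨q₀, fun p hp => hweak p hp q₀ hq₀⟩
  have hsup0 : (0:ℝ) ≤ sSup P := le_csSup hPbdd hP0
  refine le_antisymm
    (csSup_le hPne fun p hp => le_csInf ⟨q₀, hq₀⟩ fun q hq => hweak p hp q hq) ?_
  -- strong duality
  apply le_of_forall_pos_le_add
  intro ε hε
  set cc : Fin n → ℝ := fun i => ℓ i - η with hccdef
  -- the point is not in the convex set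
  have hxnot : ((0, sSup P + ε) : (Fin n → Fin n → ℝ) × ℝ) ∉ auxS n L D cc := by
    rintro ⟨h, hhC, hGle, hobj⟩
    have hmem : (1/(n:ℝ)) * ∑ i, h i * cc i ∈ P := by
      refine ⟨h, hhC.1, (hscale _).2 hhC.2, fun i j => ?_, by rw [hccdef]⟩
      have := hGle i j
      simp only [Pi.zero_apply] at this
      linarith
    have h1 : (1/(n:ℝ)) * ∑ i, h i * cc i ≤ sSup P := le_csSup hPbdd hmem
    have h2 : sSup P + ε ≤ (1/(n:ℝ)) * ∑ i, h i * cc i := hobj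
    linarith
  obtain ⟨f, u₀, hfS, hfx⟩ :=
    geometric_hahn_banach_closed_point (auxS_convex n L D cc) (auxS_closed n L D cc) hxnot
  set μ : ℝ := f (0, 1) with hμdef
  set lam : Fin n → Fin n → ℝ := fun i j => f (Pi.single i (Pi.single j 1), 0) with hlamdef
  -- decomposition of the linear functional
  have hsingle : ∀ (u : Fin n → Fin n → ℝ),
      u = ∑ i, ∑ j, u i j • (Pi.single i (Pi.single j (1:ℝ)) : Fin n → Fin n → ℝ) := by
    intro u
    funext k l
    simp [Finset.sum_apply, Pi.single_apply, ite_apply, mul_ite, Finset.sum_ite_eq]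
  have hdec : ∀ (u : Fin n → Fin n → ℝ) (t : ℝ),
      f (u, t) = (∑ i, ∑ j, u i j * lam i j) + t * μ := by
    intro u t
    have h1 : ((u, t) : (Fin n → Fin n → ℝ) × ℝ) = (u, (0:ℝ)) + (0, t) := by
      rw [Prod.mk_add_mk, add_zero, zero_add]
    have h2 : ((u, (0:ℝ)) : (Fin n → Fin n → ℝ) × ℝ)
        = ∑ i, ∑ j, u i j • ((Pi.single i (Pi.single j (1:ℝ)), 0) :
            (Fin n → Fin n → ℝ) × ℝ) := by
      rw [Prod.ext_iff]
      constructor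
      · simp only [Prod.fst_sum, Prod.smul_fst]
        exact hsingle u
      · simp [Prod.snd_sum]
    have h3 : ((0, t) : (Fin n → Fin n → ℝ) × ℝ) = t • ((0, 1) :
        (Fin n → Fin n → ℝ) × ℝ) := by
      rw [Prod.smul_mk, smul_zero, smul_eq_mul, mul_one]
    rw [h1, map_add, h2, h3, map_sum, map_smul]
    simp only [map_sum, map_smul, smul_eq_mul, hμdef, hlamdef]
  -- u₀ is positive
  have hS00 : ((0, (0:ℝ)) : (Fin n → Fin n → ℝ) × ℝ) ∈ auxS n L D cc := by
    refine ⟨0, ⟨fun i => le_rfl, by simp [hnR.le]⟩, fun i j => ?_, by simp⟩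
    simp only [Pi.zero_apply]
    simpa using mul_nonneg hL (hDnn i j)
  have hu₀pos : 0 < u₀ := by
    have := hfS _ hS00
    have hz : f ((0, (0:ℝ)) : (Fin n → Fin n → ℝ) × ℝ) = 0 := by
      have : ((0, (0:ℝ)) : (Fin n → Fin n → ℝ) × ℝ) = 0 := rfl
      rw [this, map_zero]
    linarith [hfS _ hS00, hz]
  have hfxval : f ((0, sSup P + ε) : (Fin n → Fin n → ℝ) × ℝ) = (sSup P + ε) * μ := by
    rw [hdec]; simp
  -- μ is positive
  have hμpos : 0 < μ := by
    by_contra hcon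
    push_neg at hcon
    have h1 : (sSup P + ε) * μ ≤ 0 := mul_nonpos_of_nonneg_of_nonpos (by linarith) hcon
    rw [hfxval] at hfx
    linarith
  -- lam is nonpositive
  have hlamle : ∀ i j, lam i j ≤ 0 := by
    intro i j
    by_contra hcon
    push_neg at hcon
    set s : ℝ := (u₀ + 1) / lam i j with hsdef
    have hs : 0 ≤ s := div_nonneg (by linarith) hcon.le
    have hmem : ((Pi.single i (Pi.single j s), (0:ℝ)) :
        (Fin n → Fin n → ℝ) × ℝ) ∈ auxS n L D cc := by
      refine ⟨0, ⟨fun _ => le_rfl, by simp [hnR.le]⟩, fun k l => ?_, by simp⟩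
      have h1 : (0:ℝ) ≤ (Pi.single i (Pi.single j s) : Fin n → Fin n → ℝ) k l := by
        classical
        simp only [Pi.single_apply, ite_apply, Pi.zero_apply]
        split_ifs <;> simp [hs]
      have h2 := mul_nonneg hL (hDnn k l)
      simp only [Pi.zero_apply]
      linarith
    have hval := hfS _ hmem
    rw [hdec] at hval
    have hsum : ∑ k, ∑ l, (Pi.single i (Pi.single j s) : Fin n → Fin n → ℝ) k l * lam k l
        = s * lam i j := by
      classical
      simp [Pi.single_apply, ite_apply, ite_mul, Finset.sum_ite_eq, Finset.mem_univ]
    rw [hsum] at hval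
    have : s * lam i j = u₀ + 1 := div_mul_cancel₀ _ (ne_of_gt hcon)
    simp only [zero_mul, add_zero] at hval
    linarith
  -- key inequality for every h in C
  have hkey : ∀ h ∈ auxC n, (1/(n:ℝ)) * ∑ i, h i * cc i
      + ∑ i, ∑ j, (L * D i j - (h i - h j)) * (-(lam i j)/μ) < sSup P + ε := by
    intro h hh
    have hmem : (((fun i j => h i - h j - L * D i j), (1/(n:ℝ)) * ∑ i, h i * cc i) :
        (Fin n → Fin n → ℝ) × ℝ) ∈ auxS n L D cc :=
      ⟨h, hh, fun i j => le_rfl, le_rfl⟩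
    have hval := (hfS _ hmem).trans hfx
    rw [hdec, hfxval] at hval
    have e : ∑ i, ∑ j, (L * D i j - (h i - h j)) * (-(lam i j)/μ)
        = (1/μ) * ∑ i, ∑ j, (h i - h j - L * D i j) * lam i j := by
      rw [Finset.mul_sum]
      refine Finset.sum_congr rfl fun i _ => ?_
      rw [Finset.mul_sum]
      refine Finset.sum_congr rfl fun j _ => ?_
      field_simp
      ring
    rw [e]
    set T := ∑ i, ∑ j, (h i - h j - L * D i j) * lam i j with hTdef
    set ob := (1/(n:ℝ)) * ∑ i, h i * cc i with hobdef
    have e2 : ob + (1/μ)*T = (ob * μ + T)/μ := by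
      field_simp
    rw [e2, div_lt_iff₀ hμpos]
    -- hval : T + ob * μ < (sSup P + ε) * μ
    linarith
  -- construct the dual variable
  set β : Fin n → Fin n → ℝ := fun i j => -(lam i j)/μ with hβdef
  have hβnn : ∀ i j, 0 ≤ β i j := fun i j =>
    div_nonneg (by linarith [hlamle i j]) hμpos.le
  set B : Fin n → Fin n → ℝ := fun i j => (n:ℝ) * β i j with hBdef
  have hBnn : ∀ i j, 0 ≤ B i j := fun i j => mul_nonneg hnR.le (hβnn i j)
  set a : Fin n → ℝ := fun i => cc i - ((∑ j, B i j) - (∑ j, B j i)) with hadef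
  obtain ⟨hs, hs1, hs2, hs3⟩ := aux_attain n hn a
  set S1 := ∑ i, hs i * cc i with hS1def
  set T1 := ∑ i, ∑ j, (hs i - hs j) * β i j with hT1def
  set T2 := ∑ i, ∑ j, L * D i j * β i j with hT2def
  -- relate all expressions
  have cA : Real.sqrt ((1 / n) * ∑ i,
        (max (ℓ i - ((∑ j, B i j) - (∑ j, B j i)) - η) 0) ^ 2)
      ≤ (1/(n:ℝ)) * S1 - T1 := by
    have e0 : (∑ i, (max (ℓ i - ((∑ j, B i j) - (∑ j, B j i)) - η) 0) ^ 2 : ℝ)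
        = ∑ i, (max (a i) 0) ^ 2 := by
      refine Finset.sum_congr rfl fun i _ => ?_
      rw [hadef, hccdef]
      rw [sub_right_comm]
    rw [e0]
    refine hs3.trans (le_of_eq ?_)
    -- (1/n) * ∑ hs i * a i = (1/n) * S1 - T1
    have e1 : ∑ i, hs i * a i = S1 - ∑ i, hs i * (∑ j, (B i j - B j i)) := by
      rw [hS1def, ← Finset.sum_sub_distrib]
      refine Finset.sum_congr rfl fun i _ => ?_
      rw [hadef, Finset.sum_sub_distrib]
      ring
    have e2 : ∑ i, hs i * (∑ j, (B i j - B j i)) = (n:ℝ) * T1 := by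
      rw [aux_swap n hs B, hT1def, Finset.mul_sum]
      refine Finset.sum_congr rfl fun i _ => ?_
      rw [Finset.mul_sum]
      refine Finset.sum_congr rfl fun j _ => ?_
      show (hs i - hs j) * B i j = (n:ℝ) * ((hs i - hs j) * β i j)
      rw [hBdef]
      try ring
    rw [e1, e2]
    field_simp
    try ring
  have cB : (L/(n:ℝ)) * ∑ i, ∑ j, D i j * B i j = T2 := by
    rw [hT2def, Finset.mul_sum]
    refine Finset.sum_congr rfl fun i _ => ?_
    rw [Finset.mul_sum]
    refine Finset.sum_congr rfl fun j _ => ?_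
    show (L/(n:ℝ)) * (D i j * B i j) = L * D i j * β i j
    rw [hBdef]
    field_simp
    try ring
  have cC : ∑ i, ∑ j, (L * D i j - (hs i - hs j)) * β i j = T2 - T1 := by
    rw [hT2def, hT1def, ← Finset.sum_sub_distrib]
    refine Finset.sum_congr rfl fun i _ => ?_
    rw [← Finset.sum_sub_distrib]
    refine Finset.sum_congr rfl fun j _ => ?_
    ring
  have hk := hkey hs ⟨hs1, hs2⟩
  have hk2 : (1/(n:ℝ)) * S1 + (T2 - T1) < sSup P + ε := by
    rw [← cC]
    exact hk
  -- conclude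
  have hdual_mem : (Real.sqrt ((1 / n) * ∑ i,
        (max (ℓ i - ((∑ j, B i j) - (∑ j, B j i)) - η) 0) ^ 2)
      + (L / n) * ∑ i, ∑ j, D i j * B i j) ∈ Q := ⟨B, hBnn, rfl⟩
  refine (csInf_le hQbdd hdual_mem).trans ?_
  rw [cB]
  linarith
end

section
/- Degenerate worst case for unconstrained subpopulation shift with 0-1 loss: for the uncertainty set P^α_{x,y} of all α-subpopulations of p_train over (x,y), and zero-one loss ℓ ∈ {0,1}, the worst-case risk satisfies sup_{Q ∈ P^α_{x,y}} E_Q[ℓ(θ;(x,y))] = min(1, E_{p_train}[ℓ(θ;(x,y))]/α); in particular, if the training error rate is at least α, the worst-case subpopulation risk equals 1. -/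
open MeasureTheory

/-- Degenerate worst case for unconstrained subpopulation shift with 0-1
loss.  For the uncertainty set `P^α_{x,y}` of all `α`-subpopulations of `p_train` and a
zero-one loss `ℓ`, the worst-case risk equals `min(1, E_{p_train}[ℓ]/α)`; in particular,
if the training error rate is at least `α`, the worst-case subpopulation risk equals 1. -/
theorem stmt_12 {Ω : Type*} [MeasurableSpace Ω]
    (ptrain : Measure Ω) [IsProbabilityMeasure ptrain]
    (α : ℝ) (hα0 : 0 < α) (hα1 : α ≤ 1)
    (ℓ : Ω → ℝ) (hmeas : Measurable ℓ) (h01 : ∀ ω, ℓ ω = 0 ∨ ℓ ω = 1) :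
    sSup {v : ℝ | ∃ (Q₀ : Measure Ω) (αs : ℝ) (Q₁ : Measure Ω),
        IsProbabilityMeasure Q₀ ∧ IsProbabilityMeasure Q₁ ∧ α ≤ αs ∧ αs ≤ 1 ∧
        ptrain = ENNReal.ofReal αs • Q₀ + ENNReal.ofReal (1 - αs) • Q₁ ∧
        v = ∫ ω, ℓ ω ∂Q₀}
      = min 1 ((∫ ω, ℓ ω ∂ptrain) / α) ∧
    (α ≤ ∫ ω, ℓ ω ∂ptrain →
      sSup {v : ℝ | ∃ (Q₀ : Measure Ω) (αs : ℝ) (Q₁ : Measure Ω),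
        IsProbabilityMeasure Q₀ ∧ IsProbabilityMeasure Q₁ ∧ α ≤ αs ∧ αs ≤ 1 ∧
        ptrain = ENNReal.ofReal αs • Q₀ + ENNReal.ofReal (1 - αs) • Q₁ ∧
        v = ∫ ω, ℓ ω ∂Q₀} = 1) := by
  classical
  set A : Set Ω := {ω | ℓ ω = 1} with hAdef
  have hAm : MeasurableSet A := hmeas (measurableSet_singleton 1)
  have hℓ : ℓ = A.indicator (fun _ => (1:ℝ)) := by
    funext ω
    rcases h01 ω with h | h
    · simp [Set.indicator, hAdef, h]
    · simp [Set.indicator, hAdef, h]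
  have hint : ∀ (μ : Measure Ω), ∫ ω, ℓ ω ∂μ = (μ A).toReal := by
    intro μ
    rw [hℓ]
    exact integral_indicator_one (μ := μ) hAm
  set a : ENNReal := ptrain A with ha
  set p : ℝ := a.toReal with hp
  have haf : a ≠ ⊤ := (measure_lt_top ptrain A).ne
  have hale : a ≤ 1 := prob_le_one
  have hb : ptrain Aᶜ = 1 - a := by
    rw [measure_compl hAm haf, measure_univ]
  have hbf : (1 - a : ENNReal) ≠ ⊤ :=
    ne_top_of_le_ne_top ENNReal.one_ne_top tsub_le_self
  have hp0 : 0 ≤ p := ENNReal.toReal_nonneg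
  have hp1 : p ≤ 1 := by
    rw [hp]
    exact ENNReal.toReal_le_of_le_ofReal (by norm_num) (by simpa using hale)
  have hintp : ∫ ω, ℓ ω ∂ptrain = p := hint ptrain
  -- the set
  set S : Set ℝ := {v : ℝ | ∃ (Q₀ : Measure Ω) (αs : ℝ) (Q₁ : Measure Ω),
        IsProbabilityMeasure Q₀ ∧ IsProbabilityMeasure Q₁ ∧ α ≤ αs ∧ αs ≤ 1 ∧
        ptrain = ENNReal.ofReal αs • Q₀ + ENNReal.ofReal (1 - αs) • Q₁ ∧
        v = ∫ ω, ℓ ω ∂Q₀} with hS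
  -- Upper bound
  have hub : ∀ v ∈ S, v ≤ min 1 (p / α) := by
    rintro v ⟨Q₀, αs, Q₁, hQ₀, hQ₁, hααs, hαs1, hdec, hv⟩
    have hv' : v = (Q₀ A).toReal := by rw [hv, hint]
    have hQ₀A : Q₀ A ≤ 1 := prob_le_one
    refine le_min ?_ ?_
    · rw [hv']
      exact ENNReal.toReal_le_of_le_ofReal (by norm_num) (by simpa using hQ₀A)
    · have key : ENNReal.ofReal α * Q₀ A ≤ a := by
        calc ENNReal.ofReal α * Q₀ A ≤ ENNReal.ofReal αs * Q₀ A :=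
              mul_le_mul' (ENNReal.ofReal_le_ofReal hααs) le_rfl
          _ ≤ ENNReal.ofReal αs * Q₀ A + ENNReal.ofReal (1 - αs) * Q₁ A := le_self_add
          _ = a := by rw [ha, hdec]; simp [Measure.add_apply]
      have key' : α * v ≤ p := by
        rw [hv', hp]
        calc α * (Q₀ A).toReal = (ENNReal.ofReal α * Q₀ A).toReal := by
              rw [ENNReal.toReal_mul, ENNReal.toReal_ofReal hα0.le]
          _ ≤ a.toReal := ENNReal.toReal_mono haf key
      rw [le_div_iff₀ hα0, mul_comm]
      exact key'
  -- Membership of the min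
  have hmem : min 1 (p / α) ∈ S := by
    by_cases hpa : α ≤ p
    -- Case: training error at least α; worst case is 1
    · have hmin : min 1 (p / α) = 1 := min_eq_left ((one_le_div hα0).mpr hpa)
      have hpp : 0 < p := lt_of_lt_of_le hα0 hpa
      have ha0 : a ≠ 0 := by
        intro h; rw [hp, h] at hpp; simp at hpp
      rw [hmin, hS]
      refine ⟨a⁻¹ • ptrain.restrict A, p,
        (if 1 - a = 0 then ptrain else (1 - a)⁻¹ • ptrain.restrict Aᶜ), ?_, ?_, hpa, hp1, ?_, ?_⟩
      · constructor
        simp only [Measure.smul_apply, Measure.restrict_apply MeasurableSet.univ,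
          Set.univ_inter, smul_eq_mul, ← ha]
        exact ENNReal.inv_mul_cancel ha0 haf
      · split_ifs with hb0
        · infer_instance
        · constructor
          simp only [Measure.smul_apply, Measure.restrict_apply MeasurableSet.univ,
            Set.univ_inter, smul_eq_mul, hb]
          exact ENNReal.inv_mul_cancel hb0 hbf
      · have hoa : ENNReal.ofReal p = a := by rw [hp, ENNReal.ofReal_toReal haf]
        have hob : ENNReal.ofReal (1 - p) = 1 - a := by
          have h' : (1 - a).toReal = 1 - p := by
            rw [ENNReal.toReal_sub_of_le hale (by norm_num)]
            simp [hp]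
          rw [← h', ENNReal.ofReal_toReal hbf]
        rw [hoa, hob, smul_smul, ENNReal.mul_inv_cancel ha0 haf, one_smul]
        split_ifs with hb0
        · have hres : ptrain.restrict Aᶜ = 0 := by
            rw [Measure.restrict_eq_zero, hb, hb0]
          rw [hb0, zero_smul, add_zero]
          conv_lhs => rw [← Measure.restrict_add_restrict_compl (μ := ptrain) hAm]
          rw [hres, add_zero]
        · rw [smul_smul, ENNReal.mul_inv_cancel hb0 hbf, one_smul,
            Measure.restrict_add_restrict_compl hAm]
      · rw [hint]
        have hQA : (a⁻¹ • ptrain.restrict A) A = 1 := by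
          simp only [Measure.smul_apply, Measure.restrict_apply hAm, Set.inter_self,
            smul_eq_mul, ← ha]
          exact ENNReal.inv_mul_cancel ha0 haf
        rw [hQA]
        simp
    -- Case: training error below α
    · push_neg at hpa
      have hmin : min 1 (p / α) = p / α :=
        min_eq_right ((div_le_one hα0).mpr hpa.le)
      have haα : a < ENNReal.ofReal α := by
        rw [← ENNReal.ofReal_toReal haf, ← hp]
        exact (ENNReal.ofReal_lt_ofReal_iff hα0).mpr hpa
      have hb0 : (1 - a : ENNReal) ≠ 0 := by
        have h' : a < 1 := lt_of_lt_of_le haα (by simpa using ENNReal.ofReal_le_one.mpr hα1)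
        simpa [tsub_eq_zero_iff_le, not_le] using h'
      have hoα0 : ENNReal.ofReal α ≠ 0 := by simp [hα0]
      have hoαf : ENNReal.ofReal α ≠ ⊤ := ENNReal.ofReal_ne_top
      set ν : Measure Ω := (1 - a)⁻¹ • ptrain.restrict Aᶜ with hν
      have hνuniv : ν Set.univ = 1 := by
        simp only [hν, Measure.smul_apply, Measure.restrict_apply MeasurableSet.univ,
          Set.univ_inter, smul_eq_mul, hb]
        exact ENNReal.inv_mul_cancel hb0 hbf
      have hνprob : IsProbabilityMeasure ν := ⟨hνuniv⟩
      have hνA : ν A = 0 := by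
        simp only [hν, Measure.smul_apply, Measure.restrict_apply hAm, smul_eq_mul]
        rw [Set.inter_compl_self]
        simp
      set c : ENNReal := (ENNReal.ofReal α)⁻¹ * (ENNReal.ofReal α - a) with hc
      set Q₀ : Measure Ω := (ENNReal.ofReal α)⁻¹ • ptrain.restrict A + c • ν with hQ₀def
      have hQ₀univ : Q₀ Set.univ = 1 := by
        simp only [hQ₀def, Measure.add_apply, Measure.smul_apply,
          Measure.restrict_apply MeasurableSet.univ, Set.univ_inter, smul_eq_mul,
          hνuniv, mul_one, ← ha, hc]
        rw [← mul_add, add_tsub_cancel_of_le haα.le]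
        exact ENNReal.inv_mul_cancel hoα0 hoαf
      have hQ₀A : Q₀ A = (ENNReal.ofReal α)⁻¹ * a := by
        simp only [hQ₀def, Measure.add_apply, Measure.smul_apply,
          Measure.restrict_apply hAm, Set.inter_self, smul_eq_mul, hνA, mul_zero,
          add_zero, ← ha]
      rw [hmin, hS]
      refine ⟨Q₀, α, ν, ⟨hQ₀univ⟩, hνprob, le_refl α, hα1, ?_, ?_⟩
      · rw [hQ₀def, smul_add, smul_smul, ENNReal.mul_inv_cancel hoα0 hoαf, one_smul,
          smul_smul]
        have h1 : ENNReal.ofReal α * c = ENNReal.ofReal α - a := by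
          rw [hc, ← mul_assoc, ENNReal.mul_inv_cancel hoα0 hoαf, one_mul]
        have h2 : ENNReal.ofReal (1 - α) = 1 - ENNReal.ofReal α := by
          rw [ENNReal.ofReal_sub _ hα0.le, ENNReal.ofReal_one]
        have h3 : (ENNReal.ofReal α - a) + (1 - ENNReal.ofReal α) = 1 - a := by
          refine ENNReal.eq_sub_of_add_eq haf ?_
          have hα1' : ENNReal.ofReal α ≤ 1 := by
            simpa using ENNReal.ofReal_le_one.mpr hα1
          rw [add_right_comm, tsub_add_cancel_of_le haα.le, add_comm,
            tsub_add_cancel_of_le hα1']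
        rw [h1, h2, add_assoc, ← add_smul, h3, hν, smul_smul,
          ENNReal.mul_inv_cancel hb0 hbf, one_smul,
          Measure.restrict_add_restrict_compl hAm]
      · rw [hint, hQ₀A, ENNReal.toReal_mul, ENNReal.toReal_inv,
          ENNReal.toReal_ofReal hα0.le, ← hp, div_eq_mul_inv, mul_comm]
  have hsup : sSup S = min 1 (p / α) :=
    le_antisymm (csSup_le ⟨_, hmem⟩ hub) (le_csSup ⟨_, hub⟩ hmem)
  constructor
  · rw [hintp]; exact hsup
  · intro hle
    rw [hintp] at hle
    rw [hsup, min_eq_left ((one_le_div hα0).mpr hle)]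
end
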